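/- arXiv:2008.00704 — 3 statements merged into one kernel-verified Lean document; each statement's English description precedes it below -/
import Mathlib

section
/- Let f : ℝ² × ℝⁿ → ℝ be a cost function, let w⁰ ∈ ℝⁿ be initial weights, and consider the inverse feasibility set F = {(ŵ,p,q) : ∀ x ∈ ℝ², f(x̄,ŵ) ≤ f(x,ŵ), ŵ = w⁰ + p − q, 0 ≤ p ≤ u⁺, 0 ≤ q ≤ u⁻, ŵ ≥ 0}. Suppose (w^{t+1}, p^t, q^t) minimizes the linear cost c⁺·p + c⁻·q over the relaxed set F_t where the location-optimality constraint is only required against finitely many points x⁰,…,x^t, that x^t is a global minimizer of x ↦ f(x, w^t), and that w^{t+1} = w^t. Then (w^{t+1}, p^t, q^t) minimizes c⁺·p + c⁻·q over F. -/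
/-- If the optimal solution of the relaxed problem `P_t` has unchanged
weights (`w^{t+1} = w^t`) and `x^t` globally minimizes `f(·, w^t)`, then it is optimal
for the full inverse problem `P_w`. -/
theorem row_generation_fixed_point_optimal {n : ℕ}
    (f : EuclideanSpace ℝ (Fin 2) → (Fin n → ℝ) → ℝ)
    (xbar : EuclideanSpace ℝ (Fin 2)) (w0 uplus uminus cplus cminus : Fin n → ℝ)
    (t : ℕ) (xs : ℕ → EuclideanSpace ℝ (Fin 2))
    (wt wt1 pt qt : Fin n → ℝ)
    (F Ft : Set ((Fin n → ℝ) × (Fin n → ℝ) × (Fin n → ℝ)))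
    (hF : F = {s | (∀ x : EuclideanSpace ℝ (Fin 2), f xbar s.1 ≤ f x s.1) ∧
        s.1 = w0 + s.2.1 - s.2.2 ∧
        0 ≤ s.2.1 ∧ s.2.1 ≤ uplus ∧ 0 ≤ s.2.2 ∧ s.2.2 ≤ uminus ∧ 0 ≤ s.1})
    (hFt : Ft = {s | (∀ k ≤ t, f xbar s.1 ≤ f (xs k) s.1) ∧
        s.1 = w0 + s.2.1 - s.2.2 ∧
        0 ≤ s.2.1 ∧ s.2.1 ≤ uplus ∧ 0 ≤ s.2.2 ∧ s.2.2 ≤ uminus ∧ 0 ≤ s.1})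
    (cost : (Fin n → ℝ) × (Fin n → ℝ) × (Fin n → ℝ) → ℝ)
    (hcost : cost = fun s => ∑ i, (cplus i * s.2.1 i + cminus i * s.2.2 i))
    (hmem : (wt1, pt, qt) ∈ Ft)
    (hopt : ∀ s ∈ Ft, cost (wt1, pt, qt) ≤ cost s)
    (hxt : ∀ x : EuclideanSpace ℝ (Fin 2), f (xs t) wt ≤ f x wt)
    (heq : wt1 = wt) :
    (wt1, pt, qt) ∈ F ∧ ∀ s ∈ F, cost (wt1, pt, qt) ≤ cost s := by
  subst hF hFt heq
  obtain ⟨h1, h2⟩ := hmem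
  refine ⟨⟨fun x => ?_, h2⟩, fun s hs => hopt s ⟨fun k _ => hs.1 (xs k), hs.2⟩⟩
  exact le_trans (h1 t le_rfl) (hxt x)
end

section
/- If at iteration t of the row-generation algorithm the minimizer x^t of x ↦ f(x, w^t) equals the prescribed point x̄, and (w^t, p, q) is optimal for the relaxed problem P_t, then w^t is optimal for the full inverse problem P_w. -/
/-- If at iteration `t` the minimizer `x^t` of `f(·, w^t)` equals the
prescribed point `x̄`, and `(w^t, p, q)` is optimal for the relaxed problem `P_t`,
then `w^t` is optimal for the full inverse problem `P_w`. -/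
theorem row_generation_point_stop_optimal {n : ℕ}
    (f : EuclideanSpace ℝ (Fin 2) → (Fin n → ℝ) → ℝ)
    (xbar : EuclideanSpace ℝ (Fin 2)) (w0 uplus uminus cplus cminus : Fin n → ℝ)
    (t : ℕ) (xs : ℕ → EuclideanSpace ℝ (Fin 2))
    (wt p q : Fin n → ℝ) (xt : EuclideanSpace ℝ (Fin 2))
    (F Ft : Set ((Fin n → ℝ) × (Fin n → ℝ) × (Fin n → ℝ)))
    (hF : F = {s | (∀ x : EuclideanSpace ℝ (Fin 2), f xbar s.1 ≤ f x s.1) ∧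
        s.1 = w0 + s.2.1 - s.2.2 ∧
        0 ≤ s.2.1 ∧ s.2.1 ≤ uplus ∧ 0 ≤ s.2.2 ∧ s.2.2 ≤ uminus ∧ 0 ≤ s.1})
    (hFt : Ft = {s | (∀ k ≤ t, f xbar s.1 ≤ f (xs k) s.1) ∧
        s.1 = w0 + s.2.1 - s.2.2 ∧
        0 ≤ s.2.1 ∧ s.2.1 ≤ uplus ∧ 0 ≤ s.2.2 ∧ s.2.2 ≤ uminus ∧ 0 ≤ s.1})
    (cost : (Fin n → ℝ) × (Fin n → ℝ) × (Fin n → ℝ) → ℝ)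
    (hcost : cost = fun s => ∑ i, (cplus i * s.2.1 i + cminus i * s.2.2 i))
    (hxt : ∀ x : EuclideanSpace ℝ (Fin 2), f xt wt ≤ f x wt)
    (hx : xt = xbar)
    (hmem : (wt, p, q) ∈ Ft)
    (hopt : ∀ s ∈ Ft, cost (wt, p, q) ≤ cost s) :
    (wt, p, q) ∈ F ∧ ∀ s ∈ F, cost (wt, p, q) ≤ cost s := by
  subst hF hFt hx
  obtain ⟨-, h2, h3, h4, h5, h6, h7⟩ := hmem
  constructor
  · exact ⟨fun x => hxt x, h2, h3, h4, h5, h6, h7⟩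
  · intro s hs
    exact hopt s ⟨fun k _ => hs.1 (xs k), hs.2⟩
end

section
/- For the Euclidean minisum objective, the full inverse constraint 'x̄ minimizes x ↦ Σᵢ ŵᵢ‖x − Aᵢ‖₂' is equivalent to the single finite condition ‖Σ_{i : Aᵢ ≠ x̄} ŵᵢ (Aᵢ − x̄)/‖Aᵢ − x̄‖₂ ‖₂ ≤ Σ_{i : Aᵢ = x̄} ŵᵢ, for nonnegative weights ŵ. -/
/-!
Write `f x = ∑ i, w i * ‖x - A i‖`, `S` for the sum of the unit vectors from `x̄` towards the
clients `A i ≠ x̄` weighted by `w i`, and `W` for the total weight of the clients at `x̄`. Those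
clients contribute exactly `W * ‖x - x̄‖` to `f`; the others contribute a function that is
differentiable at `x̄` with derivative `-⟪S, ·⟫` and, being convex, lies above its tangent there.
Hence `f (x̄ + u) ≥ f x̄ - ⟪S, u⟫ + W * ‖u‖`, so `⟪S, u⟫ ≤ W * ‖u‖` for all `u` suffices for
optimality, and the one-sided derivative of `f` along the ray `t ↦ x̄ + t • u` shows it is
necessary. Finally, `⟪S, u⟫ ≤ W * ‖u‖` for all `u` iff `‖S‖ ≤ W`.
-/

open Finset
open scoped RealInnerProductSpace

theorem HasDerivAt.nonneg_of_forall_pos_le {f : ℝ → ℝ} {f' a : ℝ} (hf : HasDerivAt f f' a)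
    (h : ∀ t > 0, f a ≤ f (a + t)) : 0 ≤ f' :=
  ge_of_tendsto hf.tendsto_slope_zero_right <| eventually_nhdsWithin_of_forall fun t ht =>
    smul_nonneg (inv_nonneg.mpr ht.le) (sub_nonneg.mpr (h t ht))

section InnerProductSpace

variable {E : Type*} [NormedAddCommGroup E] [InnerProductSpace ℝ E]

theorem norm_sub_inner_div_norm_le_norm_sub (v d : E) : ‖v‖ - ⟪v, d⟫ / ‖v‖ ≤ ‖d - v‖ := by
  rcases eq_or_ne v 0 with rfl | hv
  · simp
  have hpos : 0 < ‖v‖ := norm_pos_iff.mpr hv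
  calc ‖v‖ - ⟪v, d⟫ / ‖v‖ = ⟪v, v - d⟫ / ‖v‖ := by
        rw [inner_sub_right, real_inner_self_eq_norm_sq]
        field_simp
    _ ≤ ‖v - d‖ := div_le_of_le_mul₀ hpos.le (norm_nonneg _)
        ((real_inner_le_norm v (v - d)).trans_eq (mul_comm _ _))
    _ = ‖d - v‖ := norm_sub_rev v d

theorem hasDerivAt_norm_add_smul {v : E} (hv : v ≠ 0) (u : E) :
    HasDerivAt (fun t : ℝ => ‖v + t • u‖) (⟪v, u⟫ / ‖v‖) 0 := by
  have hline : HasDerivAt (fun t : ℝ => v + t • u) u 0 := by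
    simpa using ((hasDerivAt_id (0 : ℝ)).smul_const u).const_add v
  have hsqrt := hline.norm_sq.sqrt (by simpa using hv)
  simp only [zero_smul, add_zero, Real.sqrt_sq (norm_nonneg _)] at hsqrt
  convert hsqrt using 1
  ring

theorem norm_le_iff_forall_inner_le_mul_norm {S : E} {W : ℝ} (hW : 0 ≤ W) :
    ‖S‖ ≤ W ↔ ∀ u, ⟪S, u⟫ ≤ W * ‖u‖ := by
  refine ⟨fun h u => (real_inner_le_norm S u).trans (by gcongr), fun h => ?_⟩
  rcases eq_or_ne S 0 with rfl | hS
  · simpa using hW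
  have hSS := h S
  rw [real_inner_self_eq_norm_mul_norm] at hSS
  exact le_of_mul_le_mul_right hSS (norm_pos_iff.mpr hS)

end InnerProductSpace

section Weber

variable {E : Type*} [NormedAddCommGroup E] [DecidableEq E] {ι : Type*} [Fintype ι]
  (A : ι → E) (w : ι → ℝ) (x₀ : E)

noncomputable def weightAt : ℝ :=
  ∑ i ∈ univ.filter (fun i => A i = x₀), w i

theorem sum_mul_norm_sub_eq_add_weightAt (x : E) :
    ∑ i, w i * ‖x - A i‖ =
      ∑ i ∈ univ.filter (fun i => A i ≠ x₀), w i * ‖x - A i‖ + weightAt A w x₀ * ‖x - x₀‖ := by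
  rw [← sum_filter_not_add_sum_filter univ (fun i => A i = x₀), weightAt, sum_mul]
  congr 1
  exact sum_congr rfl fun i hi => by rw [(mem_filter.mp hi).2]

variable [InnerProductSpace ℝ E]

noncomputable def weberResultant : E :=
  ∑ i ∈ univ.filter (fun i => A i ≠ x₀), (w i / ‖A i - x₀‖) • (A i - x₀)

variable {A w}

theorem sum_mul_norm_sub_sub_inner_weberResultant_le (hw : ∀ i, 0 ≤ w i) (x : E) :
    ∑ i ∈ univ.filter (fun i => A i ≠ x₀), w i * ‖x₀ - A i‖ - ⟪weberResultant A w x₀, x - x₀⟫ ≤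
      ∑ i ∈ univ.filter (fun i => A i ≠ x₀), w i * ‖x - A i‖ := by
  rw [weberResultant, sum_inner, ← sum_sub_distrib]
  refine sum_le_sum fun i _ => ?_
  have h := norm_sub_inner_div_norm_le_norm_sub (A i - x₀) (x - x₀)
  rw [sub_sub_sub_cancel_right] at h
  calc w i * ‖x₀ - A i‖ - ⟪(w i / ‖A i - x₀‖) • (A i - x₀), x - x₀⟫
      = w i * (‖A i - x₀‖ - ⟪A i - x₀, x - x₀⟫ / ‖A i - x₀‖) := by
        rw [real_inner_smul_left, norm_sub_rev]; ring
    _ ≤ w i * ‖x - A i‖ := mul_le_mul_of_nonneg_left h (hw i)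

theorem hasDerivAt_sum_mul_norm_add_smul_sub (u : E) :
    HasDerivAt (fun t : ℝ => ∑ i ∈ univ.filter (fun i => A i ≠ x₀), w i * ‖x₀ + t • u - A i‖)
      (-⟪weberResultant A w x₀, u⟫) 0 := by
  have h : ∀ i ∈ univ.filter (fun i => A i ≠ x₀),
      HasDerivAt (fun t : ℝ => w i * ‖x₀ + t • u - A i‖)
        (-⟪(w i / ‖A i - x₀‖) • (A i - x₀), u⟫) 0 := by
    intro i hi
    have hne : x₀ - A i ≠ 0 := sub_ne_zero.mpr (mem_filter.mp hi).2.symm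
    simp_rw [add_sub_right_comm x₀]
    refine ((hasDerivAt_norm_add_smul hne u).const_mul (w i)).congr_deriv ?_
    rw [real_inner_smul_left, ← neg_sub x₀, inner_neg_left, norm_neg]
    ring
  rw [weberResultant, sum_inner, ← sum_neg_distrib]
  exact HasDerivAt.fun_sum h

theorem inner_weberResultant_le_of_forall_le
    (hmin : ∀ x, ∑ i, w i * ‖x₀ - A i‖ ≤ ∑ i, w i * ‖x - A i‖) (u : E) :
    ⟪weberResultant A w x₀, u⟫ ≤ weightAt A w x₀ * ‖u‖ := by
  have hderiv := (hasDerivAt_sum_mul_norm_add_smul_sub (A := A) (w := w) x₀ u).add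
    (hasDerivAt_mul_const (weightAt A w x₀ * ‖u‖) (x := 0))
  have hslope := hderiv.nonneg_of_forall_pos_le fun t ht => by
    have h := hmin (x₀ + t • u)
    rw [sum_mul_norm_sub_eq_add_weightAt A w x₀, sum_mul_norm_sub_eq_add_weightAt A w x₀,
      sub_self, add_sub_cancel_left, norm_smul, Real.norm_of_nonneg ht.le] at h
    simpa [mul_left_comm t] using h
  linarith

theorem sum_mul_norm_sub_le_of_forall_inner_le (hw : ∀ i, 0 ≤ w i)
    (h : ∀ u, ⟪weberResultant A w x₀, u⟫ ≤ weightAt A w x₀ * ‖u‖) (x : E) :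
    ∑ i, w i * ‖x₀ - A i‖ ≤ ∑ i, w i * ‖x - A i‖ := by
  rw [sum_mul_norm_sub_eq_add_weightAt A w x₀ x₀, sum_mul_norm_sub_eq_add_weightAt A w x₀ x,
    sub_self, norm_zero, mul_zero, add_zero]
  linarith [sum_mul_norm_sub_sub_inner_weberResultant_le (A := A) x₀ hw x, h (x - x₀)]

end Weber

/-- Classical optimality condition for the Euclidean Fermat–Weber
problem: `x̄` minimizes the weighted sum of Euclidean distances iff the norm of the sum
of weighted unit vectors towards the clients distinct from `x̄` is at most the total
weight of clients located at `x̄`. -/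
theorem euclidean_minisum_optimality_condition {n : ℕ}
    (A : Fin n → EuclideanSpace ℝ (Fin 2)) (xbar : EuclideanSpace ℝ (Fin 2))
    (what : Fin n → ℝ) (hw : ∀ i, 0 ≤ what i) :
    (∀ x : EuclideanSpace ℝ (Fin 2),
        (∑ i, what i * ‖xbar - A i‖) ≤ ∑ i, what i * ‖x - A i‖) ↔
      ‖∑ i ∈ Finset.univ.filter (fun i => A i ≠ xbar),
          (what i / ‖A i - xbar‖) • (A i - xbar)‖ ≤
        ∑ i ∈ Finset.univ.filter (fun i => A i = xbar), what i := by
  change _ ↔ ‖weberResultant A what xbar‖ ≤ weightAt A what xbar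
  have hW : 0 ≤ weightAt A what xbar := sum_nonneg fun i _ => hw i
  rw [norm_le_iff_forall_inner_le_mul_norm hW]
  exact ⟨inner_weberResultant_le_of_forall_le xbar,
    sum_mul_norm_sub_le_of_forall_inner_le xbar hw⟩
end
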